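/- arXiv:1502.02376 — 8 statements merged into one kernel-verified Lean document; each statement's English description precedes it below -/
import Mathlib

section
/- For every n with 1 ≤ n ≤ N−1, the function x ↦ ∫ V_{n+1}(max(x,y)) dμ(y) is convex and nondecreasing on [0,∞), and consequently every value function V_n (1 ≤ n ≤ N) is convex and nondecreasing on [0,∞). -/
open MeasureTheory Set


lemma aux_integral_props (μ : Measure ℝ) [IsProbabilityMeasure μ]
    (hmean : Integrable id μ)
    (W : ℝ → ℝ) (K : ℝ) (hK : 0 ≤ K)
    (hconv : ConvexOn ℝ (Ici (0:ℝ)) W) (hmono : MonotoneOn W (Ici (0:ℝ)))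
    (hbd : ∀ x : ℝ, 0 ≤ x → 0 ≤ W x ∧ W x ≤ x + K) :
    ConvexOn ℝ (Ici (0:ℝ)) (fun x => ∫ y, W (max x y) ∂μ) ∧
    MonotoneOn (fun x => ∫ y, W (max x y) ∂μ) (Ici (0:ℝ)) ∧
    ∀ x : ℝ, 0 ≤ x → 0 ≤ (∫ y, W (max x y) ∂μ) ∧
      (∫ y, W (max x y) ∂μ) ≤ x + K + ∫ y, |y| ∂μ := by
  have hM : Integrable (fun y : ℝ => |y|) μ := hmean.abs
  have hmem : ∀ (x y : ℝ), 0 ≤ x → max x y ∈ Ici (0:ℝ) :=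
    fun x y hx => le_trans hx (le_max_left x y)
  have hgmono : ∀ x : ℝ, 0 ≤ x → Monotone (fun y => W (max x y)) := by
    intro x hx y1 y2 h
    exact hmono (hmem x y1 hx) (hmem x y2 hx) (max_le_max le_rfl h)
  have hgint : ∀ x : ℝ, 0 ≤ x → Integrable (fun y => W (max x y)) μ := by
    intro x hx
    refine Integrable.mono' ((integrable_const (x + K)).add hM)
      ((hgmono x hx).measurable.aestronglyMeasurable) ?_
    filter_upwards with y
    have h0 := (hbd (max x y) (hmem x y hx)).1
    have h1 := (hbd (max x y) (hmem x y hx)).2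
    have h2 : max x y ≤ x + |y| :=
      max_le (by linarith [abs_nonneg y]) (by linarith [le_abs_self y])
    rw [Real.norm_eq_abs, abs_of_nonneg h0]
    simp only [Pi.add_apply]
    linarith
  have hImono : MonotoneOn (fun x => ∫ y, W (max x y) ∂μ) (Ici (0:ℝ)) := by
    intro x1 hx1 x2 hx2 h
    refine integral_mono (hgint x1 hx1) (hgint x2 hx2) ?_
    intro y
    exact hmono (hmem x1 y hx1) (hmem x2 y hx2) (max_le_max h le_rfl)
  refine ⟨⟨convex_Ici 0, ?_⟩, hImono, ?_⟩
  · intro x1 hx1 x2 hx2 a b ha hb hab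
    simp only [smul_eq_mul]
    have hx1' : (0:ℝ) ≤ x1 := hx1
    have hx2' : (0:ℝ) ≤ x2 := hx2
    have hcomb : (0:ℝ) ≤ a * x1 + b * x2 := by positivity
    have hpt : ∀ y : ℝ, W (max (a * x1 + b * x2) y) ≤
        a * W (max x1 y) + b * W (max x2 y) := by
      intro y
      have h1 : max x1 y ∈ Ici (0:ℝ) := hmem x1 y hx1'
      have h2 : max x2 y ∈ Ici (0:ℝ) := hmem x2 y hx2'
      have hya : a * y ≤ a * max x1 y :=
        mul_le_mul_of_nonneg_left (le_max_right x1 y) ha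
      have hyb : b * y ≤ b * max x2 y :=
        mul_le_mul_of_nonneg_left (le_max_right x2 y) hb
      have hxa : a * x1 ≤ a * max x1 y :=
        mul_le_mul_of_nonneg_left (le_max_left x1 y) ha
      have hxb : b * x2 ≤ b * max x2 y :=
        mul_le_mul_of_nonneg_left (le_max_left x2 y) hb
      have hyab : y = a * y + b * y := by rw [← add_mul, hab, one_mul]
      have hmaxle : max (a * x1 + b * x2) y ≤ a * max x1 y + b * max x2 y :=
        max_le (by linarith) (by linarith)
      have hcm : max (a * x1 + b * x2) y ∈ Ici (0:ℝ) := hmem _ y hcomb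
      have hrm : a * max x1 y + b * max x2 y ∈ Ici (0:ℝ) := by
        have := h1.out; have := h2.out
        simp only [mem_Ici] at *
        positivity
      calc W (max (a * x1 + b * x2) y) ≤ W (a * max x1 y + b * max x2 y) :=
            hmono hcm hrm hmaxle
        _ ≤ a * W (max x1 y) + b * W (max x2 y) := by
            have := hconv.2 h1 h2 ha hb hab
            simpa using this
    have hint1 := hgint x1 hx1'
    have hint2 := hgint x2 hx2'
    calc (∫ y, W (max (a * x1 + b * x2) y) ∂μ)
        ≤ ∫ y, a * W (max x1 y) + b * W (max x2 y) ∂μ :=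
          integral_mono (hgint _ hcomb)
            ((hint1.const_mul a).add (hint2.const_mul b)) hpt
      _ = a * (∫ y, W (max x1 y) ∂μ) + b * (∫ y, W (max x2 y) ∂μ) := by
          rw [integral_add (hint1.const_mul a) (hint2.const_mul b),
            integral_const_mul, integral_const_mul]
  · intro x hx
    constructor
    · exact integral_nonneg fun y => (hbd (max x y) (hmem x y hx)).1
    · have hpt : ∀ y : ℝ, W (max x y) ≤ (x + K) + |y| := by
        intro y
        have h1 := (hbd (max x y) (hmem x y hx)).2
        have h2 : max x y ≤ x + |y| :=
          max_le (by linarith [abs_nonneg y]) (by linarith [le_abs_self y])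
        linarith
      calc (∫ y, W (max x y) ∂μ) ≤ ∫ y, (x + K) + |y| ∂μ :=
            integral_mono (hgint x hx) ((integrable_const _).add hM) hpt
        _ = x + K + ∫ y, |y| ∂μ := by
            rw [integral_add (integrable_const _) hM, integral_const]
            simp

/-- For every `n` with `1 ≤ n ≤ N-1`, the map `x ↦ ∫ V (n+1) (max x y) dμ(y)` is
convex and nondecreasing on `[0,∞)`, and consequently every value function `V n`
(`1 ≤ n ≤ N`) is convex and nondecreasing on `[0,∞)`. -/
theorem value_functions_convex_monotone
    (N : ℕ) (hN : 2 ≤ N) (τ : ℝ) (hτ : 0 < τ)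
    (μ : Measure ℝ) [IsProbabilityMeasure μ]
    (hsupp : μ {x : ℝ | x < 0} = 0) (hmean : Integrable id μ)
    (c : ℕ → ℝ) (hc : ∀ n : ℕ, c n = 1 / (1 + (n : ℝ) * τ))
    (V : ℕ → ℝ → ℝ)
    (hVN : ∀ x : ℝ, 0 ≤ x → V N x = c N * x)
    (hVn : ∀ n : ℕ, 1 ≤ n → n ≤ N - 1 → ∀ x : ℝ, 0 ≤ x →
      V n x = max (c n * x) (∫ y, V (n + 1) (max x y) ∂μ)) :
    (∀ n : ℕ, 1 ≤ n → n ≤ N - 1 →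
      ConvexOn ℝ (Ici (0 : ℝ)) (fun x => ∫ y, V (n + 1) (max x y) ∂μ) ∧
      MonotoneOn (fun x => ∫ y, V (n + 1) (max x y) ∂μ) (Ici (0 : ℝ))) ∧
    (∀ n : ℕ, 1 ≤ n → n ≤ N →
      ConvexOn ℝ (Ici (0 : ℝ)) (V n) ∧ MonotoneOn (V n) (Ici (0 : ℝ))) := by
  set M : ℝ := ∫ y, |y| ∂μ with hMdef
  have hM0 : 0 ≤ M := integral_nonneg fun y => abs_nonneg y
  have hc01 : ∀ m : ℕ, 0 ≤ c m ∧ c m ≤ 1 := by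
    intro m
    rw [hc]
    have h1 : (0:ℝ) < 1 + (m : ℝ) * τ := by positivity
    constructor
    · positivity
    · rw [div_le_one h1]
      have : (0:ℝ) ≤ (m : ℝ) * τ := by positivity
      linarith
  -- key downward induction
  have key : ∀ k n : ℕ, n + k = N → 1 ≤ n →
      ConvexOn ℝ (Ici (0:ℝ)) (V n) ∧ MonotoneOn (V n) (Ici (0:ℝ)) ∧
      ∀ x : ℝ, 0 ≤ x → 0 ≤ V n x ∧ V n x ≤ x + (k : ℝ) * M := by
    intro k
    induction k with
    | zero =>
      intro n hn hn1
      have hnN : n = N := by omega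
      subst hnN
      have hcN := hc01 n
      refine ⟨⟨convex_Ici 0, ?_⟩, ?_, ?_⟩
      · intro x1 hx1 x2 hx2 a b ha hb hab
        simp only [smul_eq_mul]
        have hx1' : (0:ℝ) ≤ x1 := hx1
        have hx2' : (0:ℝ) ≤ x2 := hx2
        have hcomb : (0:ℝ) ≤ a * x1 + b * x2 := by positivity
        rw [hVN _ hcomb, hVN _ hx1', hVN _ hx2']
        apply le_of_eq; ring
      · intro x1 hx1 x2 hx2 h
        rw [hVN _ hx1, hVN _ hx2]
        exact mul_le_mul_of_nonneg_left h hcN.1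
      · intro x hx
        rw [hVN _ hx]
        constructor
        · exact mul_nonneg hcN.1 hx
        · have h1 : c n * x ≤ 1 * x := mul_le_mul_of_nonneg_right hcN.2 hx
          push_cast
          nlinarith [hM0]
    | succ k ih =>
      intro n hn hn1
      have hstep : (n + 1) + k = N := by omega
      obtain ⟨ihconv, ihmono, ihbd⟩ := ih (n + 1) hstep (by omega)
      have hbd' : ∀ x : ℝ, 0 ≤ x → 0 ≤ V (n+1) x ∧ V (n+1) x ≤ x + (k:ℝ)*M :=
        ihbd
      obtain ⟨Iconv, Imono, Ibd⟩ := aux_integral_props μ hmean (V (n+1))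
        ((k:ℝ)*M) (by positivity) ihconv ihmono hbd'
      have hle : n ≤ N - 1 := by omega
      have hVeq : ∀ x : ℝ, 0 ≤ x →
          V n x = max (c n * x) (∫ y, V (n + 1) (max x y) ∂μ) :=
        hVn n hn1 hle
      have hcn := hc01 n
      refine ⟨⟨convex_Ici 0, ?_⟩, ?_, ?_⟩
      · intro x1 hx1 x2 hx2 a b ha hb hab
        simp only [smul_eq_mul]
        have hx1' : (0:ℝ) ≤ x1 := hx1
        have hx2' : (0:ℝ) ≤ x2 := hx2
        have hcomb : (0:ℝ) ≤ a * x1 + b * x2 := by positivity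
        rw [hVeq _ hcomb, hVeq _ hx1', hVeq _ hx2']
        have hlin : c n * (a * x1 + b * x2) = a * (c n * x1) + b * (c n * x2) := by
          ring
        have hIc := Iconv.2 hx1 hx2 ha hb hab
        simp only [smul_eq_mul] at hIc
        refine max_le ?_ ?_
        · rw [hlin]
          have h1 : c n * x1 ≤ max (c n * x1) (∫ y, V (n+1) (max x1 y) ∂μ) :=
            le_max_left _ _
          have h2 : c n * x2 ≤ max (c n * x2) (∫ y, V (n+1) (max x2 y) ∂μ) :=
            le_max_left _ _
          have := add_le_add (mul_le_mul_of_nonneg_left h1 ha)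
            (mul_le_mul_of_nonneg_left h2 hb)
          exact this
        · calc (∫ y, V (n+1) (max (a * x1 + b * x2) y) ∂μ)
              ≤ a * (∫ y, V (n+1) (max x1 y) ∂μ) +
                b * (∫ y, V (n+1) (max x2 y) ∂μ) := hIc
            _ ≤ a * max (c n * x1) (∫ y, V (n+1) (max x1 y) ∂μ) +
                b * max (c n * x2) (∫ y, V (n+1) (max x2 y) ∂μ) :=
              add_le_add (mul_le_mul_of_nonneg_left (le_max_right _ _) ha)
                (mul_le_mul_of_nonneg_left (le_max_right _ _) hb)
      · intro x1 hx1 x2 hx2 h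
        rw [hVeq _ hx1, hVeq _ hx2]
        exact max_le_max (mul_le_mul_of_nonneg_left h hcn.1) (Imono hx1 hx2 h)
      · intro x hx
        rw [hVeq _ hx]
        constructor
        · exact le_trans (mul_nonneg hcn.1 hx) (le_max_left _ _)
        · obtain ⟨hI0, hIub⟩ := Ibd x hx
          refine max_le ?_ ?_
          · have h1 : c n * x ≤ 1 * x := mul_le_mul_of_nonneg_right hcn.2 hx
            push_cast
            nlinarith [hM0]
          · push_cast
            push_cast at hIub
            linarith
  constructor
  · intro n hn1 hnN
    have hstep : (n + 1) + (N - (n+1)) = N := by omega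
    obtain ⟨ihconv, ihmono, ihbd⟩ := key (N - (n+1)) (n+1) hstep (by omega)
    obtain ⟨Iconv, Imono, _⟩ := aux_integral_props μ hmean (V (n+1))
      (((N - (n+1) : ℕ):ℝ)*M) (by positivity) ihconv ihmono ihbd
    exact ⟨Iconv, Imono⟩
  · intro n hn1 hnN
    obtain ⟨hconv', hmono', _⟩ := key (N - n) n (by omega) hn1
    exact ⟨hconv', hmono'⟩
end

section
/- For every n with 1 ≤ n ≤ N−1 and every x ≥ 0, the value function satisfies the upper bound V_n(x) ≤ c_n · ∫_{[0,∞)^{N−n}} max(x, y_1, y_2, …, y_{N−n}) dμ^{⊗(N−n)}(y_1,…,y_{N−n}), i.e. V_n(x) is at most c_n times the expected value of the maximum of x and N−n further i.i.d. draws from μ. -/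
/-!
Write `M_k(x) = E[max(x, Y₁, …, Y_k)]`. Splitting off the first draw by Fubini gives
`M_{k+1}(x) = ∫ M_k(max x y) dμ(y)`, the Bellman recursion without the option to stop.
Backward induction then gives `V_n ≤ c_n M_{N-n}`: stopping pays `c_n x ≤ c_n M_{N-n}(x)`, and
continuing pays at most
`c_{n+1} ∫ M_{N-n-1}(max x y) dμ(y) = c_{n+1} M_{N-n}(x) ≤ c_n M_{N-n}(x)`,
since `c` is decreasing and `M ≥ 0`.
-/

open MeasureTheory

theorem Real.max_iSup_le_iff {ι : Type*} [Finite ι] {x b : ℝ} (hx : 0 ≤ x) (y : ι → ℝ) :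
    max x (⨆ i, y i) ≤ b ↔ x ≤ b ∧ ∀ i, y i ≤ b := by
  refine ⟨fun h => ⟨(le_max_left _ _).trans h, fun i => ?_⟩, fun ⟨hxb, hyb⟩ => ?_⟩
  · exact (le_ciSup (Finite.bddAbove_range y) i).trans ((le_max_right _ _).trans h)
  · exact max_le hxb (Real.iSup_le hyb (hx.trans hxb))

theorem Real.max_iSup_cons {k : ℕ} {x : ℝ} (hx : 0 ≤ x) (a : ℝ) (z : Fin k → ℝ) :
    max x (⨆ i, (Fin.cons a z : Fin (k + 1) → ℝ) i) = max (max x a) (⨆ i, z i) := by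
  refine eq_of_forall_ge_iff fun b => ?_
  rw [Real.max_iSup_le_iff hx, Real.max_iSup_le_iff (le_max_of_le_left hx), Fin.forall_fin_succ,
    max_le_iff]
  simp only [Fin.cons_zero, Fin.cons_succ, and_assoc]

theorem measurable_max_iSup {ι : Type*} [Countable ι] (x : ℝ) :
    Measurable fun y : ι → ℝ => max x (⨆ i, y i) :=
  measurable_const.max (Measurable.iSup fun i => measurable_pi_apply i)

theorem integrable_max_iSup {ι : Type*} [Fintype ι] {μ : Measure ℝ} [IsFiniteMeasure μ]
    (hμ : Integrable id μ) (x : ℝ) :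
    Integrable (fun y : ι → ℝ => max x (⨆ i, y i)) (Measure.pi fun _ => μ) := by
  have hbound : Integrable (fun y : ι → ℝ => |x| + ∑ i, |y i|) (Measure.pi fun _ => μ) :=
    (integrable_const _).add (integrable_finsetSum _ fun i _ => (integrable_eval hμ).abs)
  refine hbound.mono' (measurable_max_iSup x).aestronglyMeasurable (ae_of_all _ fun y => ?_)
  have hy : ∀ i, |y i| ≤ ∑ j, |y j| := fun i =>
    Finset.single_le_sum (fun j _ => abs_nonneg (y j)) (Finset.mem_univ i)
  have hsum : 0 ≤ ∑ i, |y i| := Finset.sum_nonneg fun i _ => abs_nonneg _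
  rw [Real.norm_eq_abs, abs_le]
  constructor
  · linarith [neg_abs_le x, le_max_left x (⨆ i, y i)]
  · refine max_le (by linarith [le_abs_self x]) (Real.iSup_le (fun i => ?_) (by positivity))
    linarith [le_abs_self (y i), hy i, abs_nonneg x]

theorem MeasurableEquiv.piFinSuccAbove_zero_symm_apply {α : Type*} [MeasurableSpace α] {k : ℕ}
    (p : α × (Fin k → α)) :
    (MeasurableEquiv.piFinSuccAbove (fun _ : Fin (k + 1) => α) 0).symm p = Fin.cons p.1 p.2 := by
  simp [MeasurableEquiv.piFinSuccAbove_symm_apply, Fin.insertNthEquiv]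

/-- The empty supremum is `0` in `ℝ`, so `expectedMax μ 0 x = x` only for `x ≥ 0`. -/
noncomputable def expectedMax (μ : Measure ℝ) (k : ℕ) (x : ℝ) : ℝ :=
  ∫ y : Fin k → ℝ, max x (⨆ i, y i) ∂(Measure.pi fun _ : Fin k => μ)

section
variable {μ : Measure ℝ} [IsProbabilityMeasure μ] {x : ℝ}

theorem expectedMax_zero (hx : 0 ≤ x) : expectedMax μ 0 x = x := by
  simp [expectedMax, max_eq_left hx]

theorem le_expectedMax (hμ : Integrable id μ) (k : ℕ) : x ≤ expectedMax μ k x := by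
  calc x = ∫ _ : Fin k → ℝ, x ∂(Measure.pi fun _ : Fin k => μ) := by simp
    _ ≤ expectedMax μ k x :=
      integral_mono (integrable_const x) (integrable_max_iSup hμ x) fun y => le_max_left _ _

theorem expectedMax_succ_eq_integral_prod (hx : 0 ≤ x) (k : ℕ) :
    expectedMax μ (k + 1) x =
      ∫ p, max (max x p.1) (⨆ i, p.2 i) ∂(μ.prod (Measure.pi fun _ : Fin k => μ)) := by
  have hmp := (measurePreserving_piFinSuccAbove (fun _ : Fin (k + 1) => μ) 0).symm
  rw [expectedMax, ← hmp.integral_comp (MeasurableEquiv.measurableEmbedding _)]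
  simp only [MeasurableEquiv.piFinSuccAbove_zero_symm_apply, Real.max_iSup_cons hx]

theorem integrable_max_max_iSup (hμ : Integrable id μ) (hx : 0 ≤ x) (k : ℕ) :
    Integrable (fun p : ℝ × (Fin k → ℝ) => max (max x p.1) (⨆ i, p.2 i))
      (μ.prod (Measure.pi fun _ : Fin k => μ)) := by
  have hmp := (measurePreserving_piFinSuccAbove (fun _ : Fin (k + 1) => μ) 0).symm
  have h := (hmp.integrable_comp_emb (MeasurableEquiv.measurableEmbedding _)).2
    (integrable_max_iSup hμ x)
  simpa only [Function.comp_def, MeasurableEquiv.piFinSuccAbove_zero_symm_apply,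
    Real.max_iSup_cons hx] using h

theorem integrable_expectedMax_max (hμ : Integrable id μ) (hx : 0 ≤ x) (k : ℕ) :
    Integrable (fun y => expectedMax μ k (max x y)) μ :=
  (integrable_max_max_iSup hμ hx k).integral_prod_left

theorem expectedMax_succ (hμ : Integrable id μ) (hx : 0 ≤ x) (k : ℕ) :
    expectedMax μ (k + 1) x = ∫ y, expectedMax μ k (max x y) ∂μ := by
  rw [expectedMax_succ_eq_integral_prod hx, integral_prod _ (integrable_max_max_iSup hμ hx k)]
  rfl

theorem max_mul_integral_le_mul_expectedMax_succ (hμ : Integrable id μ) (hx : 0 ≤ x) {k : ℕ}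
    {W : ℝ → ℝ} {a b : ℝ} (hb : 0 ≤ b) (hba : b ≤ a)
    (hW_nonneg : ∀ z, 0 ≤ z → 0 ≤ W z) (hW : ∀ z, 0 ≤ z → W z ≤ b * expectedMax μ k z) :
    max (a * x) (∫ y, W (max x y) ∂μ) ≤ a * expectedMax μ (k + 1) x := by
  have hM : x ≤ expectedMax μ (k + 1) x := le_expectedMax hμ (k + 1)
  refine max_le (mul_le_mul_of_nonneg_left hM (hb.trans hba)) ?_
  calc ∫ y, W (max x y) ∂μ ≤ ∫ y, b * expectedMax μ k (max x y) ∂μ :=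
        integral_mono_of_nonneg (ae_of_all _ fun y => hW_nonneg _ (le_max_of_le_left hx))
          ((integrable_expectedMax_max hμ hx k).const_mul b)
          (ae_of_all _ fun y => hW _ (le_max_of_le_left hx))
    _ = b * expectedMax μ (k + 1) x := by rw [integral_const_mul, expectedMax_succ hμ hx]
    _ ≤ a * expectedMax μ (k + 1) x := mul_le_mul_of_nonneg_right hba (hx.trans hM)

end

theorem value_function_upper_bound_general
    (N : ℕ) (τ : ℝ) (hτ : 0 < τ)
    (μ : Measure ℝ) [IsProbabilityMeasure μ]
    (hmean : Integrable id μ)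
    (c : ℕ → ℝ) (hc : ∀ n : ℕ, c n = 1 / (1 + (n : ℝ) * τ))
    (V : ℕ → ℝ → ℝ)
    (hVN : ∀ x : ℝ, 0 ≤ x → V N x = c N * x)
    (hVn : ∀ n : ℕ, 1 ≤ n → n ≤ N - 1 → ∀ x : ℝ, 0 ≤ x →
      V n x = max (c n * x) (∫ y, V (n + 1) (max x y) ∂μ)) :
    ∀ n : ℕ, 1 ≤ n → n ≤ N - 1 → ∀ x : ℝ, 0 ≤ x →
      V n x ≤ c n *
        ∫ y : Fin (N - n) → ℝ, max x (⨆ i : Fin (N - n), y i)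
          ∂(Measure.pi fun _ : Fin (N - n) => μ) := by
  have hc_nonneg : ∀ n : ℕ, 0 ≤ c n := fun n => by rw [hc]; positivity
  have hc_anti : ∀ n : ℕ, c (n + 1) ≤ c n := fun n => by
    rw [hc, hc]
    gcongr
    exact_mod_cast n.le_succ
  have hV_nonneg : ∀ m, 1 ≤ m → m ≤ N → ∀ z, 0 ≤ z → 0 ≤ V m z := by
    intro m hm hmN z hz
    rcases hmN.eq_or_lt with rfl | hlt
    · rw [hVN z hz]
      exact mul_nonneg (hc_nonneg m) hz
    · rw [hVn m hm (by omega) z hz]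
      exact le_max_of_le_left (mul_nonneg (hc_nonneg m) hz)
  suffices key :
      ∀ k n, n + k = N → 1 ≤ n → ∀ x, 0 ≤ x → V n x ≤ c n * expectedMax μ k x from
    fun n hn hnN x hx => key (N - n) n (by omega) hn x hx
  intro k
  induction k with
  | zero =>
    intro n hnN _ x hx
    obtain rfl : n = N := hnN
    rw [hVN x hx, expectedMax_zero hx]
  | succ k ih =>
    intro n hnk hn x hx
    rw [hVn n hn (by omega) x hx]
    exact max_mul_integral_le_mul_expectedMax_succ hmean hx (hc_nonneg _) (hc_anti n)
      (fun z hz => hV_nonneg _ (by omega) (by omega) z hz) (ih (n + 1) (by omega) (by omega))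

/-- For `1 ≤ n ≤ N-1` and `x ≥ 0`, the value function satisfies
`V n x ≤ c n * E[max(x, y₁, …, y_{N-n})]` where `y₁,…,y_{N-n}` are i.i.d. draws from `μ`. -/
theorem value_function_upper_bound
    (N : ℕ) (hN : 2 ≤ N) (τ : ℝ) (hτ : 0 < τ)
    (μ : Measure ℝ) [IsProbabilityMeasure μ]
    (hsupp : μ {x : ℝ | x < 0} = 0) (hmean : Integrable id μ)
    (c : ℕ → ℝ) (hc : ∀ n : ℕ, c n = 1 / (1 + (n : ℝ) * τ))
    (V : ℕ → ℝ → ℝ)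
    (hVN : ∀ x : ℝ, 0 ≤ x → V N x = c N * x)
    (hVn : ∀ n : ℕ, 1 ≤ n → n ≤ N - 1 → ∀ x : ℝ, 0 ≤ x →
      V n x = max (c n * x) (∫ y, V (n + 1) (max x y) ∂μ)) :
    ∀ n : ℕ, 1 ≤ n → n ≤ N - 1 → ∀ x : ℝ, 0 ≤ x →
      V n x ≤ c n *
        ∫ y : Fin (N - n) → ℝ, max x (⨆ i : Fin (N - n), y i)
          ∂(Measure.pi fun _ : Fin (N - n) => μ) :=
  value_function_upper_bound_general N τ hτ μ hmean c hc V hVN hVn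
end

section
/- For every n with 1 ≤ n ≤ N, the ratio V_n(x)/(c_n·x) tends to 1 as x → ∞. -/
/-!
Backward induction from `V_N = c_N x` gives the sandwich
`c_n x ≤ V_n x ≤ c_n x + (N - n) E[ω⁺]`: continuing is worth at most `c_{n+1} max(x, ω)`
plus the accumulated error, and since `c_{n+1} ≤ c_n ≤ 1` and `max(x, ω) ≤ x + ω⁺`, each step
adds at most `E[ω⁺]`. The additive error is negligible against `c_n x → ∞`.
-/

open MeasureTheory Set Filter

theorem tendsto_div_nhds_one_of_le_of_le_add {α : Type*} {l : Filter α} {f g : α → ℝ} (K : ℝ)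
    (hf : Tendsto f l atTop) (hlow : ∀ᶠ x in l, f x ≤ g x) (hup : ∀ᶠ x in l, g x ≤ f x + K) :
    Tendsto (fun x => g x / f x) l (nhds 1) := by
  have hupper : Tendsto (fun x => 1 + K / f x) l (nhds 1) := by
    simpa using tendsto_const_nhds.add (tendsto_const_nhds.div_atTop hf)
  refine tendsto_of_tendsto_of_tendsto_of_le_of_le' tendsto_const_nhds hupper ?_ ?_
  · filter_upwards [hlow, hf.eventually_gt_atTop 0] with x hx hfx
    rwa [le_div_iff₀ hfx, one_mul]
  · filter_upwards [hup, hf.eventually_gt_atTop 0] with x hx hfx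
    rwa [div_le_iff₀ hfx, add_mul, one_mul, div_mul_cancel₀ _ hfx.ne']

section Discount

variable {τ : ℝ}

theorem one_div_one_add_nat_mul_pos (hτ : 0 ≤ τ) (n : ℕ) : 0 < 1 / (1 + (n : ℝ) * τ) := by
  positivity

theorem one_div_one_add_nat_mul_le_one (hτ : 0 ≤ τ) (n : ℕ) : 1 / (1 + (n : ℝ) * τ) ≤ 1 :=
  div_le_one_of_le₀ (le_add_of_nonneg_right (by positivity)) (by positivity)

theorem antitone_one_div_one_add_nat_mul (hτ : 0 ≤ τ) :
    Antitone fun n : ℕ => 1 / (1 + (n : ℝ) * τ) := by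
  intro m n hmn
  apply one_div_le_one_div_of_le (by positivity)
  gcongr

end Discount

section ValueFunction

variable {μ : Measure ℝ} [IsProbabilityMeasure μ]

theorem integral_comp_max_le (hmean : Integrable id μ) {W : ℝ → ℝ} {a C x : ℝ}
    (ha0 : 0 ≤ a) (ha1 : a ≤ 1) (hx : 0 ≤ x) (hW0 : ∀ z, 0 ≤ z → 0 ≤ W z)
    (hW : ∀ z, 0 ≤ z → W z ≤ a * z + C) :
    ∫ y, W (max x y) ∂μ ≤ a * x + C + ∫ y, max y 0 ∂μ := by
  have hpos : Integrable (fun y : ℝ => max y 0) μ := hmean.pos_part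
  have hpointwise : ∀ y, W (max x y) ≤ a * x + C + max y 0 := fun y => by
    have hmax : max x y ≤ x + max y 0 := max_le (by linarith [le_max_right y 0])
      (by linarith [le_max_left y 0])
    have hscaled : a * max x y ≤ a * x + max y 0 := by
      nlinarith [mul_le_mul_of_nonneg_left hmax ha0, le_max_right y 0]
    linarith [hW _ (hx.trans (le_max_left x y))]
  calc ∫ y, W (max x y) ∂μ ≤ ∫ y, (a * x + C + max y 0) ∂μ :=
        integral_mono_of_nonneg (.of_forall fun y => hW0 _ (hx.trans (le_max_left x y)))
          ((integrable_const _).add hpos) (.of_forall hpointwise)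
    _ = a * x + C + ∫ y, max y 0 ∂μ := by
        rw [integral_add (integrable_const _) hpos, integral_const, probReal_univ, one_smul]

variable {N : ℕ} {c : ℕ → ℝ} {V : ℕ → ℝ → ℝ}

theorem value_function_bounds (hmean : Integrable id μ) (hc0 : ∀ n, 0 ≤ c n)
    (hc1 : ∀ n, c n ≤ 1) (hanti : Antitone c) (hVN : ∀ x : ℝ, 0 ≤ x → V N x = c N * x)
    (hVn : ∀ n : ℕ, 1 ≤ n → n ≤ N - 1 → ∀ x : ℝ, 0 ≤ x →
      V n x = max (c n * x) (∫ y, V (n + 1) (max x y) ∂μ))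
    {n : ℕ} (hn1 : 1 ≤ n) (hnN : n ≤ N) {x : ℝ} (hx : 0 ≤ x) :
    c n * x ≤ V n x ∧ V n x ≤ c n * x + ((N - n : ℕ) : ℝ) * ∫ y, max y 0 ∂μ := by
  induction hnN using Nat.decreasingInduction generalizing x with
  | self => simp [hVN x hx]
  | of_succ k hkN ih =>
    have hrec := hVn k hn1 (by omega) x hx
    have hcount : ((N - k : ℕ) : ℝ) = ((N - (k + 1) : ℕ) : ℝ) + 1 := by
      rw [← Nat.cast_add_one]; congr 1; omega
    have hM : 0 ≤ ∫ y, max y 0 ∂μ := integral_nonneg fun y => le_max_right y 0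
    have hcont := integral_comp_max_le (μ := μ) hmean (hc0 (k + 1)) (hc1 (k + 1)) hx
      (fun z hz => (mul_nonneg (hc0 _) hz).trans (ih (by omega) hz).1)
      (fun z hz => (ih (by omega) hz).2)
    have hck : c (k + 1) * x ≤ c k * x := mul_le_mul_of_nonneg_right (hanti k.le_succ) hx
    rw [hrec, hcount]
    refine ⟨le_max_left _ _, max_le ?_ ?_⟩
    · exact le_add_of_nonneg_right (mul_nonneg (by positivity) hM)
    · linarith

end ValueFunction

theorem value_function_ratio_tendsto_one_general
    (N : ℕ) (τ : ℝ) (hτ : 0 < τ)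
    (μ : Measure ℝ) [IsProbabilityMeasure μ]
    (hmean : Integrable id μ)
    (c : ℕ → ℝ) (hc : ∀ n : ℕ, c n = 1 / (1 + (n : ℝ) * τ))
    (V : ℕ → ℝ → ℝ)
    (hVN : ∀ x : ℝ, 0 ≤ x → V N x = c N * x)
    (hVn : ∀ n : ℕ, 1 ≤ n → n ≤ N - 1 → ∀ x : ℝ, 0 ≤ x →
      V n x = max (c n * x) (∫ y, V (n + 1) (max x y) ∂μ)) :
    ∀ n : ℕ, 1 ≤ n → n ≤ N →
      Tendsto (fun x : ℝ => V n x / (c n * x)) atTop (nhds 1) := by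
  have hc_pos (m : ℕ) : 0 < c m := hc m ▸ one_div_one_add_nat_mul_pos hτ.le m
  have hc_le_one (m : ℕ) : c m ≤ 1 := hc m ▸ one_div_one_add_nat_mul_le_one hτ.le m
  have hc_anti : Antitone c := funext hc ▸ antitone_one_div_one_add_nat_mul hτ.le
  intro n hn1 hnN
  have hbounds := fun x (hx : 0 ≤ x) =>
    value_function_bounds hmean (fun m => (hc_pos m).le) hc_le_one hc_anti hVN hVn hn1 hnN hx
  refine tendsto_div_nhds_one_of_le_of_le_add (((N - n : ℕ) : ℝ) * ∫ y, max y 0 ∂μ)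
    (tendsto_id.const_mul_atTop (hc_pos n)) ?_ ?_
  · filter_upwards [eventually_ge_atTop 0] with x hx using (hbounds x hx).1
  · filter_upwards [eventually_ge_atTop 0] with x hx using (hbounds x hx).2

/-- For every `1 ≤ n ≤ N`, the ratio `V n x / (c n * x)` tends to `1` as `x → ∞`. -/
theorem value_function_ratio_tendsto_one
    (N : ℕ) (hN : 2 ≤ N) (τ : ℝ) (hτ : 0 < τ)
    (μ : Measure ℝ) [IsProbabilityMeasure μ]
    (hsupp : μ {x : ℝ | x < 0} = 0) (hmean : Integrable id μ)
    (c : ℕ → ℝ) (hc : ∀ n : ℕ, c n = 1 / (1 + (n : ℝ) * τ))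
    (V : ℕ → ℝ → ℝ)
    (hVN : ∀ x : ℝ, 0 ≤ x → V N x = c N * x)
    (hVn : ∀ n : ℕ, 1 ≤ n → n ≤ N - 1 → ∀ x : ℝ, 0 ≤ x →
      V n x = max (c n * x) (∫ y, V (n + 1) (max x y) ∂μ)) :
    ∀ n : ℕ, 1 ≤ n → n ≤ N →
      Tendsto (fun x : ℝ => V n x / (c n * x)) atTop (nhds 1) :=
  value_function_ratio_tendsto_one_general N τ hτ μ hmean c hc V hVN hVn
end

section
/- Assume in addition μ((0,∞)) > 0. Then for every n with 1 ≤ n ≤ N−1, the line x ↦ c_n·x and the convex function x ↦ ∫ V_{n+1}(max(x,y)) dμ(y) intersect at exactly one point on (0,∞): there exists a unique t_n > 0 satisfying the fixed-point equation c_n·t_n = ∫ V_{n+1}(max(t_n,y)) dμ(y). Moreover the value function has the threshold form: V_n(x) = c_n·x for all x ≥ t_n, and V_n(x) = ∫ V_{n+1}(max(x,y)) dμ(y) for all 0 ≤ x < t_n. -/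
open MeasureTheory Set

/-!
By backward induction every `V m` is nondecreasing on `[0, ∞)` with slopes at most `c m`, and
integrating `x ↦ W (max x y)` against `μ` preserves this property. So
`G x = ∫ V (n + 1) (max x y) dμ(y)` has slopes at most `c (n + 1) < c n`, which makes
`G x - c n * x` continuous and strictly decreasing at rate at least `c n - c (n + 1)`. It is
positive at `0` because `μ` charges `(0, ∞)`, hence it has exactly one zero `t n > 0`, and its
sign on either side of `t n` decides which branch of the maximum defining `V n` is active.
-/

/-- On `[0, ∞)`, every difference quotient of `W` lies in `[0, L]`. -/
def SlopesInIcc (L : ℝ) (W : ℝ → ℝ) : Prop :=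
  MonotoneOn W (Ici 0) ∧ AntitoneOn (fun x => W x - L * x) (Ici 0)

lemma slopesInIcc_mul_left {L : ℝ} (hL : 0 ≤ L) : SlopesInIcc L (fun x => L * x) :=
  ⟨fun _ _ _ _ hab => mul_le_mul_of_nonneg_left hab hL, fun _ _ _ _ _ => by simp⟩

namespace SlopesInIcc

variable {L L' : ℝ} {W G : ℝ → ℝ}

lemma congr (hW : SlopesInIcc L W) (h : EqOn W G (Ici 0)) : SlopesInIcc L G :=
  ⟨hW.1.congr h, hW.2.congr fun x hx => by simp only [h hx]⟩

lemma mono (hW : SlopesInIcc L' W) (hL : L' ≤ L) : SlopesInIcc L W := by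
  refine ⟨hW.1, fun a ha b hb hab => ?_⟩
  have := hW.2 ha hb hab
  have := mul_le_mul_of_nonneg_left hab (sub_nonneg.2 hL)
  dsimp only at *
  linarith

lemma sub_le_mul (hW : SlopesInIcc L W) {a b : ℝ} (ha : 0 ≤ a) (hab : a ≤ b) :
    W b - W a ≤ L * (b - a) := by
  have := hW.2 ha (ha.trans hab) hab
  linarith

lemma max_mul (hG : SlopesInIcc L G) (hL : 0 ≤ L) :
    SlopesInIcc L (fun x => max (L * x) (G x)) :=
  ⟨(slopesInIcc_mul_left hL).1.max hG.1,
    ((antitoneOn_const (c := 0)).max hG.2).congr fun x _ => by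
      rw [← max_sub_sub_right, sub_self]⟩

lemma continuousOn (hW : SlopesInIcc L W) (hL : 0 ≤ L) : ContinuousOn W (Ici 0) := by
  refine (LipschitzOnWith.of_dist_le_mul (K := L.toNNReal) fun x hx y hy => ?_).continuousOn
  rw [Real.coe_toNNReal _ hL, Real.dist_eq, Real.dist_eq]
  rcases le_total x y with h | h
  · rw [abs_sub_comm (W x), abs_of_nonneg (sub_nonneg.2 (hW.1 hx hy h)), abs_sub_comm x,
      abs_of_nonneg (sub_nonneg.2 h)]
    exact hW.sub_le_mul hx h
  · rw [abs_of_nonneg (sub_nonneg.2 (hW.1 hy hx h)), abs_of_nonneg (sub_nonneg.2 h)]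
    exact hW.sub_le_mul hy h

section Integral

variable {μ : Measure ℝ}

lemma integrable_comp_max [IsFiniteMeasure μ] (hW : SlopesInIcc L W) (hL : 0 ≤ L)
    (hmean : Integrable id μ) {x : ℝ} (hx : 0 ≤ x) : Integrable (fun y => W (max x y)) μ := by
  have hmono : Monotone (fun y => W (max x y)) := fun y y' h =>
    hW.1 (le_max_of_le_left hx) (le_max_of_le_left hx) (max_le_max_left x h)
  refine Integrable.mono' ((integrable_const |W x|).add (hmean.abs.const_mul L))
    hmono.measurable.aestronglyMeasurable (Filter.Eventually.of_forall fun y => ?_)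
  have hlow : W x ≤ W (max x y) := hW.1 hx (le_max_of_le_left hx) (le_max_left x y)
  have hup := hW.sub_le_mul hx (le_max_left x y)
  have hmax : max x y - x ≤ |y| := by
    rcases le_total x y with h | h
    · rw [max_eq_right h]; linarith [le_abs_self y]
    · rw [max_eq_left h, sub_self]; exact abs_nonneg y
  simp only [Pi.add_apply, id, Real.norm_eq_abs, abs_le]
  constructor <;> nlinarith [neg_abs_le (W x), le_abs_self (W x), abs_nonneg y]

variable [IsProbabilityMeasure μ]

lemma integral_comp_max (hW : SlopesInIcc L W) (hL : 0 ≤ L) (hmean : Integrable id μ) :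
    SlopesInIcc L (fun x => ∫ y, W (max x y) ∂μ) := by
  have hint {x : ℝ} (hx : 0 ≤ x) := hW.integrable_comp_max hL hmean hx
  refine ⟨fun a (ha : 0 ≤ a) b (hb : 0 ≤ b) hab => integral_mono (hint ha) (hint hb) fun y =>
    hW.1 (le_max_of_le_left ha) (le_max_of_le_left hb) (max_le_max_right y hab),
    fun a (ha : 0 ≤ a) b (hb : 0 ≤ b) hab => ?_⟩
  have hpoint (y : ℝ) : W (max b y) - L * b ≤ W (max a y) - L * a := by
    have hmax : max b y ≤ max a y + (b - a) :=
      max_le (by linarith [le_max_left a y]) (by linarith [le_max_right a y])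
    have := hW.sub_le_mul (le_max_of_le_left ha) (max_le_max_right y hab)
    nlinarith
  have := integral_mono ((hint hb).sub (integrable_const _)) ((hint ha).sub (integrable_const _))
    hpoint
  simpa [integral_sub (hint hb) (integrable_const _), integral_sub (hint ha) (integrable_const _)]
    using this

end Integral

lemma strictAntiOn_sub_mul (hG : SlopesInIcc L' G) (h : L' < L) :
    StrictAntiOn (fun x => G x - L * x) (Ici 0) := fun a ha b _ hab => by
  have := hG.sub_le_mul ha hab.le
  have := mul_lt_mul_of_pos_right h (sub_pos.2 hab)
  linarith

lemma existsUnique_mul_eq (hG : SlopesInIcc L' G) (h : L' < L) (hL' : 0 ≤ L') (hG0 : 0 < G 0) :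
    ∃! t : ℝ, 0 < t ∧ L * t = G t := by
  -- `G x - L * x ≤ G 0 - (L - L') * x`, and the right-hand side vanishes at `x₀`
  set x₀ := G 0 / (L - L')
  have hx₀ : 0 ≤ x₀ := div_nonneg hG0.le (sub_nonneg.2 h.le)
  have hfx₀ : G x₀ - L * x₀ ≤ 0 := by
    have := hG.sub_le_mul le_rfl hx₀
    have : (L - L') * x₀ = G 0 := mul_div_cancel₀ _ (sub_ne_zero.2 h.ne')
    linarith
  have hcont : ContinuousOn (fun x => G x - L * x) (Icc 0 x₀) :=
    ((hG.continuousOn hL').mono Icc_subset_Ici_self).sub (continuousOn_const.mul continuousOn_id)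
  obtain ⟨t, ht, hft⟩ := intermediate_value_Icc' hx₀ hcont ⟨hfx₀, by simpa using hG0.le⟩
  have ht0 : t ≠ 0 := by
    rintro rfl
    simp only [mul_zero, sub_zero] at hft
    exact hG0.ne' hft
  refine ⟨t, ⟨ht.1.lt_of_ne' ht0, by linarith [hft]⟩, fun s ⟨hs, hsG⟩ => ?_⟩
  exact (hG.strictAntiOn_sub_mul h).injOn hs.le ht.1 (by simp only [← hsG, hft, sub_self])

lemma max_mul_eq_left (hG : SlopesInIcc L' G) (h : L' < L) {t x : ℝ} (ht : 0 ≤ t)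
    (htG : L * t = G t) (hx : t ≤ x) : max (L * x) (G x) = L * x := by
  have := (hG.strictAntiOn_sub_mul h).antitoneOn ht (ht.trans hx) hx
  exact max_eq_left (by linarith)

lemma max_mul_eq_right (hG : SlopesInIcc L' G) (h : L' < L) {t x : ℝ} (hx : 0 ≤ x)
    (htG : L * t = G t) (hxt : x < t) : max (L * x) (G x) = G x := by
  have := (hG.strictAntiOn_sub_mul h).antitoneOn hx (hx.trans hxt.le) hxt.le
  exact max_eq_right (by linarith)

end SlopesInIcc

lemma integral_comp_max_zero_pos {μ : Measure ℝ} {W : ℝ → ℝ}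
    (hint : Integrable (fun y => W (max 0 y)) μ) (hW0 : 0 ≤ W 0)
    (hWpos : ∀ x, 0 < x → 0 < W x) (hμ : 0 < μ (Ioi 0)) : 0 < ∫ y, W (max 0 y) ∂μ := by
  have hnonneg : 0 ≤ fun y => W (max 0 y) := fun y => by
    rcases le_or_gt y 0 with h | h
    · simpa [max_eq_left h] using hW0
    · simpa [max_eq_right h.le] using (hWpos y h).le
  rw [integral_pos_iff_support_of_nonneg hnonneg hint]
  refine hμ.trans_le (measure_mono fun y (hy : 0 < y) => ?_)
  simpa [Function.mem_support, max_eq_right hy.le] using (hWpos y hy).ne'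

def IsValueFunction (μ : Measure ℝ) (c : ℕ → ℝ) (N : ℕ) (V : ℕ → ℝ → ℝ) : Prop :=
  (∀ x : ℝ, 0 ≤ x → V N x = c N * x) ∧
  ∀ n : ℕ, 1 ≤ n → n ≤ N - 1 → ∀ x : ℝ, 0 ≤ x →
    V n x = max (c n * x) (∫ y, V (n + 1) (max x y) ∂μ)

namespace IsValueFunction

variable {μ : Measure ℝ} {c : ℕ → ℝ} {N m : ℕ} {V : ℕ → ℝ → ℝ}

lemma mul_le (hV : IsValueFunction μ c N V) (hm1 : 1 ≤ m) (hmN : m ≤ N) {x : ℝ}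
    (hx : 0 ≤ x) : c m * x ≤ V m x := by
  rcases hmN.lt_or_eq with h | rfl
  · rw [hV.2 m hm1 (by omega) x hx]; exact le_max_left _ _
  · rw [hV.1 x hx]

lemma slopesInIcc [IsProbabilityMeasure μ] (hV : IsValueFunction μ c N V)
    (hmean : Integrable id μ) (hc_nonneg : ∀ n, 0 ≤ c n) (hc_anti : ∀ n, c (n + 1) ≤ c n)
    (hm1 : 1 ≤ m) (hmN : m ≤ N) : SlopesInIcc (c m) (V m) := by
  induction hmN using Nat.decreasingInduction with
  | self => exact (slopesInIcc_mul_left (hc_nonneg N)).congr fun x hx => (hV.1 x hx).symm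
  | of_succ k hk ih =>
    have hG := ((ih (by omega)).integral_comp_max (hc_nonneg _) hmean).mono (hc_anti k)
    exact (hG.max_mul (hc_nonneg k)).congr fun x hx => (hV.2 k hm1 (by omega) x hx).symm

end IsValueFunction

theorem threshold_exists_unique_and_value_function_form_general
    (N : ℕ) (τ : ℝ) (hτ : 0 < τ)
    (μ : Measure ℝ) [IsProbabilityMeasure μ]
    (hmean : Integrable id μ)
    (hpos : 0 < μ (Ioi (0 : ℝ)))
    (c : ℕ → ℝ) (hc : ∀ n : ℕ, c n = 1 / (1 + (n : ℝ) * τ))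
    (V : ℕ → ℝ → ℝ)
    (hVN : ∀ x : ℝ, 0 ≤ x → V N x = c N * x)
    (hVn : ∀ n : ℕ, 1 ≤ n → n ≤ N - 1 → ∀ x : ℝ, 0 ≤ x →
      V n x = max (c n * x) (∫ y, V (n + 1) (max x y) ∂μ)) :
    ∀ n : ℕ, 1 ≤ n → n ≤ N - 1 →
      (∃! t : ℝ, 0 < t ∧ c n * t = ∫ y, V (n + 1) (max t y) ∂μ) ∧
      (∀ t : ℝ, 0 < t → c n * t = (∫ y, V (n + 1) (max t y) ∂μ) →
        (∀ x : ℝ, t ≤ x → V n x = c n * x) ∧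
        (∀ x : ℝ, 0 ≤ x → x < t → V n x = ∫ y, V (n + 1) (max x y) ∂μ)) := by
  intro n hn1 hnN
  have hc_pos (m : ℕ) : 0 < c m := by rw [hc]; positivity
  have hc_lt (m : ℕ) : c (m + 1) < c m := by rw [hc, hc]; gcongr; linarith
  have hV : IsValueFunction μ c N V := ⟨hVN, hVn⟩
  have hW := hV.slopesInIcc hmean (fun m => (hc_pos m).le) (fun m => (hc_lt m).le)
    (m := n + 1) (by omega) (by omega)
  have hG := hW.integral_comp_max (hc_pos _).le hmean
  have hG0 : 0 < ∫ y, V (n + 1) (max 0 y) ∂μ :=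
    integral_comp_max_zero_pos (hW.integrable_comp_max (hc_pos _).le hmean le_rfl)
      (by simpa using hV.mul_le (m := n + 1) (by omega) (by omega) le_rfl)
      (fun x hx => (mul_pos (hc_pos _) hx).trans_le (hV.mul_le (by omega) (by omega) hx.le)) hpos
  refine ⟨hG.existsUnique_mul_eq (hc_lt n) (hc_pos _).le hG0,
    fun t ht htG => ⟨fun x hx => ?_, fun x hx0 hxt => ?_⟩⟩
  · rw [hVn n hn1 hnN x (ht.le.trans hx)]
    exact hG.max_mul_eq_left (hc_lt n) ht.le htG hx
  · rw [hVn n hn1 hnN x hx0]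
    exact hG.max_mul_eq_right (hc_lt n) hx0 htG hxt

/-- If `μ((0,∞)) > 0`, for every `1 ≤ n ≤ N-1` the line `x ↦ c n * x` and the convex map
`x ↦ ∫ V (n+1) (max x y) dμ(y)` intersect at exactly one point `t n > 0`, and the value
function has the threshold form determined by `t n`. -/
theorem threshold_exists_unique_and_value_function_form
    (N : ℕ) (hN : 2 ≤ N) (τ : ℝ) (hτ : 0 < τ)
    (μ : Measure ℝ) [IsProbabilityMeasure μ]
    (hsupp : μ {x : ℝ | x < 0} = 0) (hmean : Integrable id μ)
    (hpos : 0 < μ (Ioi (0 : ℝ)))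
    (c : ℕ → ℝ) (hc : ∀ n : ℕ, c n = 1 / (1 + (n : ℝ) * τ))
    (V : ℕ → ℝ → ℝ)
    (hVN : ∀ x : ℝ, 0 ≤ x → V N x = c N * x)
    (hVn : ∀ n : ℕ, 1 ≤ n → n ≤ N - 1 → ∀ x : ℝ, 0 ≤ x →
      V n x = max (c n * x) (∫ y, V (n + 1) (max x y) ∂μ)) :
    ∀ n : ℕ, 1 ≤ n → n ≤ N - 1 →
      (∃! t : ℝ, 0 < t ∧ c n * t = ∫ y, V (n + 1) (max t y) ∂μ) ∧
      (∀ t : ℝ, 0 < t → c n * t = (∫ y, V (n + 1) (max t y) ∂μ) →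
        (∀ x : ℝ, t ≤ x → V n x = c n * x) ∧
        (∀ x : ℝ, 0 ≤ x → x < t → V n x = ∫ y, V (n + 1) (max x y) ∂μ)) :=
  threshold_exists_unique_and_value_function_form_general N τ hτ μ hmean hpos c hc V hVN hVn
end

section
/- Let 0 < x₁ < x₂ and suppose μ((x₂,∞)) > 0. Then h(x₁)/x₁ > h(x₂)/x₂; in particular, if μ((x,∞)) > 0 for every x > 0, the map x ↦ h(x)/x is strictly decreasing on (0,∞). -/
open MeasureTheory Set

/-!
After dividing by `x`, `h x / x = ∫ max 1 (y / x) dμ(y)`, and the integrand is antitone in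
`x > 0` for every `y`. For `x₁ < x₂ < y` it drops strictly, from `y / x₁` to `y / x₂`, so the
integral drops strictly as soon as `μ((x₂,∞)) > 0`.
-/

theorem integral_lt_integral_of_le_of_lt_on {α : Type*} [MeasurableSpace α] {μ : Measure α}
    {f g : α → ℝ} {s : Set α} (hf : Integrable f μ) (hg : Integrable g μ) (hfg : f ≤ g)
    (hlt : ∀ x ∈ s, f x < g x) (hs : 0 < μ s) :
    ∫ x, f x ∂μ < ∫ x, g x ∂μ := by
  have hsupp : s ⊆ Function.support (g - f) := fun x hx =>
    (sub_pos.mpr (hlt x hx)).ne'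
  have hpos : 0 < ∫ x, (g - f) x ∂μ :=
    (integral_pos_iff_support_of_nonneg (sub_nonneg.mpr hfg) (hg.sub hf)).mpr
      (hs.trans_le (measure_mono hsupp))
  rw [Pi.sub_def, integral_sub hg hf] at hpos
  linarith

theorem max_div_le_max_div {a b : ℝ} (ha : 0 < a) (hab : a ≤ b) (y : ℝ) :
    max b y / b ≤ max a y / a := by
  have hb : 0 < b := ha.trans_le hab
  rw [← max_div_div_right hb.le, ← max_div_div_right ha.le, div_self hb.ne', div_self ha.ne']
  rcases le_or_gt y 0 with hy | hy
  · exact max_le (le_max_left _ _)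
      ((div_nonpos_of_nonpos_of_nonneg hy hb.le).trans (zero_le_one.trans (le_max_left _ _)))
  · exact max_le_max le_rfl (div_le_div_of_nonneg_left hy.le ha hab)

theorem max_div_lt_max_div {a b y : ℝ} (ha : 0 < a) (hab : a < b) (hby : b < y) :
    max b y / b < max a y / a := by
  rw [max_eq_right hby.le, max_eq_right (hab.trans hby).le]
  exact div_lt_div_of_pos_left (ha.trans (hab.trans hby)) ha hab

theorem integral_max_div_lt {μ : Measure ℝ} [IsFiniteMeasure μ] (hmean : Integrable id μ)
    {a b : ℝ} (ha : 0 < a) (hab : a < b) (hμ : 0 < μ (Ioi b)) :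
    (∫ y, max b y ∂μ) / b < (∫ y, max a y ∂μ) / a := by
  have hint : ∀ x : ℝ, Integrable (fun y => max x y / x) μ := fun x =>
    ((integrable_const x).sup hmean).div_const x
  rw [← integral_div, ← integral_div]
  exact integral_lt_integral_of_le_of_lt_on (hint b) (hint a)
    (max_div_le_max_div ha hab.le) (fun y hy => max_div_lt_max_div ha hab hy) hμ

theorem expected_max_ratio_strict_anti_general
    (μ : Measure ℝ) [IsProbabilityMeasure μ]
    (hmean : Integrable id μ)
    (h : ℝ → ℝ) (hh : ∀ x : ℝ, h x = ∫ y, max x y ∂μ) :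
    (∀ x₁ x₂ : ℝ, 0 < x₁ → x₁ < x₂ → 0 < μ (Ioi x₂) → h x₂ / x₂ < h x₁ / x₁) ∧
    ((∀ x : ℝ, 0 < x → 0 < μ (Ioi x)) →
      StrictAntiOn (fun x : ℝ => h x / x) (Ioi 0)) := by
  have key : ∀ x₁ x₂ : ℝ, 0 < x₁ → x₁ < x₂ → 0 < μ (Ioi x₂) → h x₂ / x₂ < h x₁ / x₁ :=
    fun x₁ x₂ hx₁ hx₁₂ hμ => by
      simpa only [hh] using integral_max_div_lt hmean hx₁ hx₁₂ hμ
  exact ⟨key, fun hall x₁ hx₁ x₂ _ hlt => key x₁ x₂ hx₁ hlt (hall x₂ (hx₁.trans hlt))⟩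

/-- If `0 < x₁ < x₂` and `μ((x₂,∞)) > 0`, then `h(x₁)/x₁ > h(x₂)/x₂` for
`h(x) = ∫ max(x,y) dμ(y)`; in particular, if `μ((x,∞)) > 0` for every `x > 0`,
then `x ↦ h(x)/x` is strictly decreasing on `(0,∞)`. -/
theorem expected_max_ratio_strict_anti
    (μ : Measure ℝ) [IsProbabilityMeasure μ]
    (hsupp : μ {x : ℝ | x < 0} = 0) (hmean : Integrable id μ)
    (h : ℝ → ℝ) (hh : ∀ x : ℝ, h x = ∫ y, max x y ∂μ) :
    (∀ x₁ x₂ : ℝ, 0 < x₁ → x₁ < x₂ → 0 < μ (Ioi x₂) → h x₂ / x₂ < h x₁ / x₁) ∧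
    ((∀ x : ℝ, 0 < x → 0 < μ (Ioi x)) →
      StrictAntiOn (fun x : ℝ => h x / x) (Ioi 0)) :=
  expected_max_ratio_strict_anti_general μ hmean h hh
end

section
/- The thresholds are maximized at the last probing stage: t_n ≤ t_{N−1} for every n with 1 ≤ n ≤ N−1. -/
open MeasureTheory Set

/-!
It suffices to compare consecutive thresholds: fix `n`, let `T = t_{n+1}` and
`G(s) = ∫ V_{n+1}(max s y) dμ(y) - c_n s`. By backward induction every `V_m` is nondecreasing
on `[0, ∞)` with slope at most `c_m`; as `c` is decreasing, `G` is nonincreasing there, and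
`t_n` is its only positive zero, so `t_n ≤ T` follows from `G(T) ≤ 0`.
Beyond `T` stopping is optimal at stage `n+1`, so `V_{n+1}` is linear on `[T, ∞)` and
`∫ V_{n+1}(max T y) dμ = c_{n+1} ∫ max T y dμ`, while
`c_{n+2} ∫ max T y dμ ≤ ∫ V_{n+2}(max T y) dμ = c_{n+1} T`. The log-convexity
`c_{n+1}² ≤ c_n c_{n+2}` combines the two into `G(T) ≤ 0`.
-/

def MonotoneLipschitzOnNonneg (L : ℝ) (f : ℝ → ℝ) : Prop :=
  MonotoneOn f (Ici 0) ∧ ∀ ⦃a b : ℝ⦄, 0 ≤ a → a ≤ b → f b ≤ f a + L * (b - a)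

noncomputable def continuationValue (μ : Measure ℝ) (f : ℝ → ℝ) (x : ℝ) : ℝ :=
  ∫ y, f (max x y) ∂μ

namespace MonotoneLipschitzOnNonneg

variable {μ : Measure ℝ} {f g : ℝ → ℝ} {L c : ℝ}

lemma nonneg (hf : MonotoneLipschitzOnNonneg L f) : 0 ≤ L := by
  have h₁ := hf.1 (mem_Ici.2 le_rfl) (mem_Ici.2 zero_le_one) zero_le_one
  have h₂ := hf.2 le_rfl zero_le_one
  linarith

lemma congr (hf : MonotoneLipschitzOnNonneg L f) (hfg : EqOn f g (Ici 0)) :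
    MonotoneLipschitzOnNonneg L g := by
  refine ⟨hf.1.congr hfg, fun a b ha hab => ?_⟩
  rw [← hfg (mem_Ici.2 (ha.trans hab)), ← hfg (mem_Ici.2 ha)]
  exact hf.2 ha hab

lemma id : MonotoneLipschitzOnNonneg 1 id :=
  ⟨monotone_id.monotoneOn _, fun a b _ _ => by simp⟩

lemma const_mul (hc : 0 ≤ c) : MonotoneLipschitzOnNonneg c (c * ·) :=
  ⟨fun _ _ _ _ hab => mul_le_mul_of_nonneg_left hab hc, fun a b _ _ => by linarith⟩

lemma monotone_comp_max (hf : MonotoneLipschitzOnNonneg L f) {x : ℝ} (hx : 0 ≤ x) :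
    Monotone fun y => f (max x y) := fun _ _ hab =>
  hf.1 (mem_Ici.2 (hx.trans (le_max_left _ _))) (mem_Ici.2 (hx.trans (le_max_left _ _)))
    (max_le_max le_rfl hab)

lemma comp_max_le (hf : MonotoneLipschitzOnNonneg L f) {a b : ℝ} (ha : 0 ≤ a) (hab : a ≤ b)
    (y : ℝ) : f (max b y) ≤ f (max a y) + L * (b - a) := by
  have hlip := hf.2 (ha.trans (le_max_left a y)) (max_le_max hab (le_refl y))
  have hstep : max b y ≤ max a y + (b - a) :=
    max_le (by linarith [le_max_left a y]) (by linarith [le_max_right a y])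
  nlinarith [hf.nonneg]

lemma integrable_comp_max [IsFiniteMeasure μ] (hf : MonotoneLipschitzOnNonneg L f)
    (hμ : Integrable _root_.id μ) {x : ℝ} (hx : 0 ≤ x) :
    Integrable (fun y => f (max x y)) μ := by
  refine Integrable.mono' ((integrable_const |f x|).add (hμ.abs.const_mul L))
    (hf.monotone_comp_max hx).measurable.aestronglyMeasurable (ae_of_all _ fun y => ?_)
  have hlow : f x ≤ f (max x y) :=
    hf.1 (mem_Ici.2 hx) (mem_Ici.2 (hx.trans (le_max_left x y))) (le_max_left x y)
  have hup := hf.2 hx (le_max_left x y)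
  have hgap : max x y ≤ x + |y| :=
    max_le (by linarith [abs_nonneg y]) (by linarith [le_abs_self y])
  rw [Real.norm_eq_abs, abs_le]
  simp only [Pi.add_apply, _root_.id]
  constructor <;> nlinarith [neg_abs_le (f x), le_abs_self (f x), hf.nonneg]

variable [IsProbabilityMeasure μ]

lemma continuationValue (hf : MonotoneLipschitzOnNonneg L f) (hμ : Integrable _root_.id μ) :
    MonotoneLipschitzOnNonneg L (continuationValue μ f) := by
  refine ⟨fun a ha b hb hab => ?_, fun a b ha hab => ?_⟩
  · exact integral_mono (hf.integrable_comp_max hμ ha) (hf.integrable_comp_max hμ hb)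
      fun y => hf.1 (mem_Ici.2 (le_max_of_le_left ha)) (mem_Ici.2 (le_max_of_le_left hb))
        (max_le_max hab le_rfl)
  · calc ∫ y, f (max b y) ∂μ ≤ ∫ y, (f (max a y) + L * (b - a)) ∂μ :=
          integral_mono (hf.integrable_comp_max hμ (ha.trans hab))
            ((hf.integrable_comp_max hμ ha).add (integrable_const _)) (hf.comp_max_le ha hab)
      _ = ∫ y, f (max a y) ∂μ + L * (b - a) := by
          rw [integral_add (hf.integrable_comp_max hμ ha) (integrable_const _), integral_const,
            probReal_univ, one_smul]

lemma max_mul_continuationValue (hf : MonotoneLipschitzOnNonneg L f)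
    (hμ : Integrable _root_.id μ) (hLc : L ≤ c) :
    MonotoneLipschitzOnNonneg c fun x => max (c * x) (_root_.continuationValue μ f x) := by
  have hc := const_mul (hf.nonneg.trans hLc)
  have hv := hf.continuationValue hμ
  refine ⟨fun a ha b hb hab => max_le_max (hc.1 ha hb hab) (hv.1 ha hb hab),
    fun a b ha hab => max_le ?_ ?_⟩
  · linarith [hc.2 ha hab, le_max_left (c * a) (_root_.continuationValue μ f a)]
  · nlinarith [hv.2 ha hab, le_max_right (c * a) (_root_.continuationValue μ f a)]

end MonotoneLipschitzOnNonneg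

section Thresholds

variable {μ : Measure ℝ} {f g : ℝ → ℝ} {c₀ c₁ c₂ t T : ℝ}

lemma mul_integral_max_le_continuationValue [IsFiniteMeasure μ]
    (hf : MonotoneLipschitzOnNonneg c₂ f) (hμ : Integrable id μ)
    (hf_ge : ∀ x, 0 ≤ x → c₂ * x ≤ f x) {x : ℝ} (hx : 0 ≤ x) :
    c₂ * ∫ y, max x y ∂μ ≤ continuationValue μ f x := by
  rw [← integral_const_mul]
  exact integral_mono ((MonotoneLipschitzOnNonneg.id.integrable_comp_max hμ hx).const_mul _)
    (hf.integrable_comp_max hμ hx) fun y => hf_ge _ (le_max_of_le_left hx)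

variable [IsProbabilityMeasure μ]

lemma continuationValue_le_mul_of_threshold_le (hf : MonotoneLipschitzOnNonneg c₂ f)
    (hμ : Integrable id μ) (hc₂₁ : c₂ ≤ c₁) (hT : 0 ≤ T)
    (hT_eq : c₁ * T = continuationValue μ f T) {z : ℝ} (hz : T ≤ z) :
    continuationValue μ f z ≤ c₁ * z := by
  nlinarith [(hf.continuationValue hμ).2 hT hz]

theorem threshold_le_of_next_threshold (hμ : Integrable id μ)
    (hf : MonotoneLipschitzOnNonneg c₂ f) (hf_ge : ∀ x, 0 ≤ x → c₂ * x ≤ f x)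
    (hg : EqOn (fun x => max (c₁ * x) (continuationValue μ f x)) g (Ici 0))
    (hc₂ : 0 < c₂) (hc₂₁ : c₂ ≤ c₁) (hc₁₀ : c₁ ≤ c₀) (hlog : c₁ * c₁ ≤ c₀ * c₂)
    (hT : 0 < T) (hT_eq : c₁ * T = continuationValue μ f T)
    (ht_eq : c₀ * t = continuationValue μ g t)
    (ht_unique : ∀ s, 0 < s → c₀ * s = continuationValue μ g s → s = t) : t ≤ T := by
  have hg_lin : ∀ z, T ≤ z → g z = c₁ * z := fun z hz => by
    rw [← hg (mem_Ici.2 (hT.le.trans hz))]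
    exact max_eq_left (continuationValue_le_mul_of_threshold_le hf hμ hc₂₁ hT.le hT_eq hz)
  have hgT : continuationValue μ g T = c₁ * ∫ y, max T y ∂μ := by
    rw [← integral_const_mul]
    exact integral_congr_ae (ae_of_all _ fun y => hg_lin _ (le_max_left T y))
  have hM := mul_integral_max_le_continuationValue hf hμ hf_ge hT.le
  have hgT_le : continuationValue μ g T ≤ c₀ * T := by
    rw [hgT]
    refine le_of_mul_le_mul_left ?_ hc₂
    nlinarith [mul_le_mul_of_nonneg_left (hM.trans hT_eq.ge) (hc₂.le.trans hc₂₁)]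
  have hg_mono := ((hf.max_mul_continuationValue hμ hc₂₁).congr hg).continuationValue hμ
  by_contra! hTt
  have hT_root : c₀ * T = continuationValue μ g T := by nlinarith [hg_mono.2 hT.le hTt.le]
  exact hTt.ne (ht_unique T hT hT_root)

end Thresholds

section Discount

variable {τ : ℝ} {c : ℕ → ℝ}

lemma discount_pos (hτ : 0 ≤ τ) (hc : ∀ n : ℕ, c n = 1 / (1 + n * τ)) (n : ℕ) : 0 < c n := by
  rw [hc]
  positivity

lemma discount_antitone (hτ : 0 ≤ τ) (hc : ∀ n : ℕ, c n = 1 / (1 + n * τ)) : Antitone c :=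
  antitone_nat_of_succ_le fun n => by
    rw [hc, hc]
    gcongr
    simp

lemma discount_sq_le (hτ : 0 ≤ τ) (hc : ∀ n : ℕ, c n = 1 / (1 + n * τ)) (n : ℕ) :
    c (n + 1) * c (n + 1) ≤ c n * c (n + 2) := by
  rw [hc, hc, hc, div_mul_div_comm, div_mul_div_comm, div_le_div_iff₀ (by positivity)
    (by positivity)]
  push_cast
  nlinarith [sq_nonneg τ]

end Discount

section ValueFunction

variable {N : ℕ} {μ : Measure ℝ} {c : ℕ → ℝ} {V : ℕ → ℝ → ℝ}

lemma mul_le_valueFunction (hVN : ∀ x : ℝ, 0 ≤ x → V N x = c N * x)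
    (hVn : ∀ n : ℕ, 1 ≤ n → n ≤ N - 1 → ∀ x : ℝ, 0 ≤ x →
      V n x = max (c n * x) (continuationValue μ (V (n + 1)) x))
    {m : ℕ} (hm : 1 ≤ m) (hmN : m ≤ N) {x : ℝ} (hx : 0 ≤ x) : c m * x ≤ V m x := by
  obtain rfl | hlt := hmN.eq_or_lt
  · exact (hVN x hx).ge
  · exact (hVn m hm (by omega) x hx).ge.trans' (le_max_left _ _)

lemma monotoneLipschitz_valueFunction [IsProbabilityMeasure μ] (hμ : Integrable id μ)
    (hc_nonneg : ∀ n, 0 ≤ c n) (hc : Antitone c)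
    (hVN : ∀ x : ℝ, 0 ≤ x → V N x = c N * x)
    (hVn : ∀ n : ℕ, 1 ≤ n → n ≤ N - 1 → ∀ x : ℝ, 0 ≤ x →
      V n x = max (c n * x) (continuationValue μ (V (n + 1)) x))
    {m : ℕ} (hm : 1 ≤ m) (hmN : m ≤ N) : MonotoneLipschitzOnNonneg (c m) (V m) := by
  induction hmN using Nat.decreasingInduction with
  | self =>
    exact (MonotoneLipschitzOnNonneg.const_mul (hc_nonneg N)).congr fun x hx => (hVN x hx).symm
  | of_succ k hk ih =>
    exact ((ih (by omega)).max_mul_continuationValue hμ (hc k.le_succ)).congr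
      fun x hx => (hVn k hm (by omega) x hx).symm

end ValueFunction

theorem thresholds_le_last_general
    (N : ℕ) (τ : ℝ) (hτ : 0 < τ)
    (μ : Measure ℝ) [IsProbabilityMeasure μ]
    (hmean : Integrable id μ)
    (c : ℕ → ℝ) (hc : ∀ n : ℕ, c n = 1 / (1 + (n : ℝ) * τ))
    (V : ℕ → ℝ → ℝ)
    (hVN : ∀ x : ℝ, 0 ≤ x → V N x = c N * x)
    (hVn : ∀ n : ℕ, 1 ≤ n → n ≤ N - 1 → ∀ x : ℝ, 0 ≤ x →
      V n x = max (c n * x) (∫ y, V (n + 1) (max x y) ∂μ))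
    (t : ℕ → ℝ)
    (ht : ∀ n : ℕ, 1 ≤ n → n ≤ N - 1 →
      (0 < t n ∧ c n * t n = ∫ y, V (n + 1) (max (t n) y) ∂μ) ∧
      (∀ s : ℝ, 0 < s → c n * s = (∫ y, V (n + 1) (max s y) ∂μ) → s = t n)) :
    ∀ n : ℕ, 1 ≤ n → n ≤ N - 1 → t n ≤ t (N - 1) := by
  have hc_pos := discount_pos hτ.le hc
  have hc_anti := discount_antitone hτ.le hc
  have hV : ∀ m, 1 ≤ m → m ≤ N → MonotoneLipschitzOnNonneg (c m) (V m) := fun _ =>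
    monotoneLipschitz_valueFunction hmean (fun n => (hc_pos n).le) hc_anti hVN hVn
  have hstep : ∀ k ∈ Icc 1 (N - 1), k + 1 ∈ Icc 1 (N - 1) → t k ≤ t (k + 1) := by
    rintro k ⟨hk, -⟩ ⟨-, hkN⟩
    exact threshold_le_of_next_threshold hmean (hV (k + 2) (by omega) (by omega))
      (fun _ => mul_le_valueFunction hVN hVn (by omega) (by omega))
      (fun x hx => (hVn (k + 1) (by omega) hkN x hx).symm) (hc_pos _) (hc_anti (by omega))
      (hc_anti (by omega)) (discount_sq_le hτ.le hc k) (ht (k + 1) (by omega) hkN).1.1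
      (ht (k + 1) (by omega) hkN).1.2 (ht k hk (by omega)).1.2 (ht k hk (by omega)).2
  intro n hn hnN
  exact monotoneOn_of_le_succ ordConnected_Icc (fun k _ hk hk' => hstep k hk hk')
    ⟨hn, hnN⟩ ⟨by omega, le_rfl⟩ hnN

/-- The thresholds are maximized at the last probing stage:
`t n ≤ t (N-1)` for every `1 ≤ n ≤ N-1`. -/
theorem thresholds_le_last
    (N : ℕ) (hN : 2 ≤ N) (τ : ℝ) (hτ : 0 < τ)
    (μ : Measure ℝ) [IsProbabilityMeasure μ]
    (hsupp : μ {x : ℝ | x < 0} = 0) (hmean : Integrable id μ)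
    (hposμ : 0 < μ (Ioi (0 : ℝ)))
    (c : ℕ → ℝ) (hc : ∀ n : ℕ, c n = 1 / (1 + (n : ℝ) * τ))
    (V : ℕ → ℝ → ℝ)
    (hVN : ∀ x : ℝ, 0 ≤ x → V N x = c N * x)
    (hVn : ∀ n : ℕ, 1 ≤ n → n ≤ N - 1 → ∀ x : ℝ, 0 ≤ x →
      V n x = max (c n * x) (∫ y, V (n + 1) (max x y) ∂μ))
    (t : ℕ → ℝ)
    (ht : ∀ n : ℕ, 1 ≤ n → n ≤ N - 1 →
      (0 < t n ∧ c n * t n = ∫ y, V (n + 1) (max (t n) y) ∂μ) ∧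
      (∀ s : ℝ, 0 < s → c n * s = (∫ y, V (n + 1) (max s y) ∂μ) → s = t n)) :
    ∀ n : ℕ, 1 ≤ n → n ≤ N - 1 → t n ≤ t (N - 1) :=
  thresholds_le_last_general N τ hτ μ hmean c hc V hVN hVn t ht
end

section
/- For any n with 1 ≤ n ≤ N−2, if t_n ≥ t_{n+1}, then the threshold t_n satisfies the scalar equation c_n·t_n = c_{n+1}·h(t_n), where h(x) = ∫ max(x,y) dμ(y). -/
open MeasureTheory Set

/-!
By backward induction, every `V m` is nondecreasing on `[0, ∞)` with slopes at most `c m`: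
this property passes through `x ↦ ∫ W (max x y) dμ` and through the maximum with `c m * x`,
because `c` is decreasing. Hence the continuation value at stage `n + 1` grows with slope at
most `c (n + 2) ≤ c (n + 1)`; it equals `c (n + 1) * x` at `x = t (n + 1)`, so it stays below
`c (n + 1) * x` for all `x ≥ t (n + 1)`. When `t n ≥ t (n + 1)`, stopping at stage `n + 1` is
therefore optimal at every point `max (t n) y`, which turns the equation defining `t n` into
`c n * t n = c (n + 1) * h (t n)`.
-/

def MonotoneSlopeLE (L : ℝ) (W : ℝ → ℝ) : Prop :=
  ∀ ⦃x x' : ℝ⦄, 0 ≤ x → x ≤ x' → W x ≤ W x' ∧ W x' ≤ W x + L * (x' - x)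

namespace MonotoneSlopeLE

variable {L L' a : ℝ} {W W' : ℝ → ℝ}

lemma nonneg (hW : MonotoneSlopeLE L W) : 0 ≤ L := by
  obtain ⟨h₀, h₁⟩ := hW le_rfl zero_le_one
  linarith

lemma mono (hW : MonotoneSlopeLE L W) (hLL' : L ≤ L') : MonotoneSlopeLE L' W :=
  fun x x' hx hxx' => by
    obtain ⟨h₀, h₁⟩ := hW hx hxx'
    exact ⟨h₀, h₁.trans (by gcongr)⟩

lemma congr (hW : MonotoneSlopeLE L W) (h : ∀ x, 0 ≤ x → W x = W' x) :
    MonotoneSlopeLE L W' := fun x x' hx hxx' => by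
  rw [← h x hx, ← h x' (hx.trans hxx')]
  exact hW hx hxx'

lemma const_mul (ha : 0 ≤ a) : MonotoneSlopeLE a (a * ·) :=
  fun _ _ _ hxx' => ⟨mul_le_mul_of_nonneg_left hxx' ha, by linarith⟩

lemma le_mul_of_eq_mul (hW : MonotoneSlopeLE L W) (hLa : L ≤ a) {t x : ℝ} (ht : 0 ≤ t)
    (hWt : W t = a * t) (htx : t ≤ x) : W x ≤ a * x := by
  have := (hW ht htx).2
  nlinarith

lemma comp_max (hW : MonotoneSlopeLE L W) (y : ℝ) :
    MonotoneSlopeLE L fun x => W (max x y) := fun x x' hx hxx' => by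
  obtain ⟨h₀, h₁⟩ := hW (hx.trans (le_max_left x y)) (max_le_max_right y hxx')
  refine ⟨h₀, h₁.trans ?_⟩
  have : max x' y - max x y ≤ x' - x := by
    rcases le_total x' y with h | h
    · rw [max_eq_right h, max_eq_right (hxx'.trans h)]; linarith
    · rw [max_eq_left h]; linarith [le_max_left x y]
  gcongr
  exact hW.nonneg

lemma integrable_comp_max {μ : Measure ℝ} [IsFiniteMeasure μ] (hW : MonotoneSlopeLE L W)
    (hμ : Integrable id μ) {x : ℝ} (hx : 0 ≤ x) : Integrable (fun y => W (max x y)) μ := by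
  have hmono : Monotone fun y => W (max x y) := fun y y' hyy' =>
    (hW (hx.trans (le_max_left x y)) (max_le_max_left x hyy')).1
  refine ((integrable_const |W x|).add (hμ.abs.const_mul L)).mono'
    hmono.measurable.aestronglyMeasurable (Filter.Eventually.of_forall fun y => ?_)
  obtain ⟨h₀, h₁⟩ := hW hx (le_max_left x y)
  have hxy : max x y - x ≤ |y| := by
    rcases le_total x y with h | h
    · rw [max_eq_right h]; linarith [le_abs_self y]
    · rw [max_eq_left h]; linarith [abs_nonneg y]
  have := mul_le_mul_of_nonneg_left hxy hW.nonneg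
  have := mul_nonneg hW.nonneg (abs_nonneg y)
  rw [Real.norm_eq_abs, abs_le]
  constructor <;> simp only [Pi.add_apply, id] <;> cases abs_cases (W x) <;> linarith

lemma integral_comp_max {μ : Measure ℝ} [IsProbabilityMeasure μ] (hW : MonotoneSlopeLE L W)
    (hμ : Integrable id μ) : MonotoneSlopeLE L fun x => ∫ y, W (max x y) ∂μ :=
  fun x x' hx hxx' => by
    have hi := hW.integrable_comp_max hμ hx
    have hi' := hW.integrable_comp_max hμ (hx.trans hxx')
    refine ⟨integral_mono hi hi' fun y => (hW.comp_max y hx hxx').1, ?_⟩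
    calc ∫ y, W (max x' y) ∂μ ≤ ∫ y, (W (max x y) + L * (x' - x)) ∂μ :=
          integral_mono hi' (hi.add (integrable_const _)) fun y => (hW.comp_max y hx hxx').2
      _ = (∫ y, W (max x y) ∂μ) + L * (x' - x) := by
          rw [integral_add hi (integrable_const _), integral_const, probReal_univ, one_smul]

lemma max (hW : MonotoneSlopeLE L W) (hW' : MonotoneSlopeLE L W') :
    MonotoneSlopeLE L fun x => max (W x) (W' x) := fun x x' hx hxx' => by
  obtain ⟨h₀, h₁⟩ := hW hx hxx'
  obtain ⟨h₀', h₁'⟩ := hW' hx hxx'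
  refine ⟨max_le_max h₀ h₀', max_le ?_ ?_⟩
  · linarith [le_max_left (W x) (W' x)]
  · linarith [le_max_right (W x) (W' x)]

end MonotoneSlopeLE

lemma monotoneSlopeLE_of_backward_recursion {N : ℕ} {μ : Measure ℝ} [IsProbabilityMeasure μ]
    (hμ : Integrable id μ) {c : ℕ → ℝ} (hcN : 0 ≤ c N) (hc : Antitone c)
    {V : ℕ → ℝ → ℝ} (hVN : ∀ x : ℝ, 0 ≤ x → V N x = c N * x)
    (hVn : ∀ n : ℕ, 1 ≤ n → n ≤ N - 1 → ∀ x : ℝ, 0 ≤ x →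
      V n x = max (c n * x) (∫ y, V (n + 1) (max x y) ∂μ))
    {m : ℕ} (hm : 1 ≤ m) (hmN : m ≤ N) : MonotoneSlopeLE (c m) (V m) := by
  induction hmN using Nat.decreasingInduction with
  | self => exact (MonotoneSlopeLE.const_mul hcN).congr fun x hx => (hVN x hx).symm
  | of_succ k hk ih =>
    have hnext := (ih (by omega)).integral_comp_max hμ |>.mono (hc k.le_succ)
    exact ((MonotoneSlopeLE.const_mul (hcN.trans (hc hk.le))).max hnext).congr
      fun x hx => (hVn k hm (by omega) x hx).symm

lemma antitone_one_div_one_add_mul {τ : ℝ} (hτ : 0 ≤ τ) :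
    Antitone fun n : ℕ => 1 / (1 + (n : ℝ) * τ) := fun m n hmn => by
  have : (m : ℝ) * τ ≤ n * τ := by gcongr
  exact one_div_le_one_div_of_le (by positivity) (by linarith)

theorem threshold_scalar_equation_of_ge_next_general
    (N : ℕ) (τ : ℝ) (hτ : 0 < τ)
    (μ : Measure ℝ) [IsProbabilityMeasure μ]
    (hmean : Integrable id μ)
    (c : ℕ → ℝ) (hc : ∀ n : ℕ, c n = 1 / (1 + (n : ℝ) * τ))
    (V : ℕ → ℝ → ℝ)
    (hVN : ∀ x : ℝ, 0 ≤ x → V N x = c N * x)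
    (hVn : ∀ n : ℕ, 1 ≤ n → n ≤ N - 1 → ∀ x : ℝ, 0 ≤ x →
      V n x = max (c n * x) (∫ y, V (n + 1) (max x y) ∂μ))
    (t : ℕ → ℝ)
    (ht : ∀ n : ℕ, 1 ≤ n → n ≤ N - 1 →
      (0 < t n ∧ c n * t n = ∫ y, V (n + 1) (max (t n) y) ∂μ) ∧
      (∀ s : ℝ, 0 < s → c n * s = (∫ y, V (n + 1) (max s y) ∂μ) → s = t n))
    (h : ℝ → ℝ) (hh : ∀ x : ℝ, h x = ∫ y, max x y ∂μ) :
    ∀ n : ℕ, 1 ≤ n → n ≤ N - 2 → t (n + 1) ≤ t n →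
      c n * t n = c (n + 1) * h (t n) := by
  intro n hn hnN hge
  have hc_anti : Antitone c := by
    simpa only [← funext hc] using antitone_one_div_one_add_mul hτ.le
  have hcN : 0 ≤ c N := by rw [hc]; positivity
  obtain ⟨⟨-, htn⟩, -⟩ := ht n hn (by omega)
  obtain ⟨⟨htn₁_pos, htn₁⟩, -⟩ := ht (n + 1) (by omega) (by omega)
  have hcontinuation := (monotoneSlopeLE_of_backward_recursion hmean hcN hc_anti hVN hVn
    (m := n + 2) (by omega) (by omega)).integral_comp_max hmean
  have hstop (y : ℝ) : V (n + 1) (max (t n) y) = c (n + 1) * max (t n) y := by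
    have hle : t (n + 1) ≤ max (t n) y := hge.trans (le_max_left _ _)
    rw [hVn (n + 1) (by omega) (by omega) _ (htn₁_pos.le.trans hle)]
    exact max_eq_left <|
      hcontinuation.le_mul_of_eq_mul (hc_anti (n + 1).le_succ) htn₁_pos.le htn₁.symm hle
  rw [htn, hh, ← integral_const_mul]
  simp only [hstop]

/-- For `1 ≤ n ≤ N-2`, if `t n ≥ t (n+1)` then the threshold `t n` satisfies the scalar
equation `c n * t n = c (n+1) * h (t n)` with `h(x) = ∫ max(x,y) dμ(y)`. -/
theorem threshold_scalar_equation_of_ge_next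
    (N : ℕ) (hN : 3 ≤ N) (τ : ℝ) (hτ : 0 < τ)
    (μ : Measure ℝ) [IsProbabilityMeasure μ]
    (hsupp : μ {x : ℝ | x < 0} = 0) (hmean : Integrable id μ)
    (hposμ : 0 < μ (Ioi (0 : ℝ)))
    (c : ℕ → ℝ) (hc : ∀ n : ℕ, c n = 1 / (1 + (n : ℝ) * τ))
    (V : ℕ → ℝ → ℝ)
    (hVN : ∀ x : ℝ, 0 ≤ x → V N x = c N * x)
    (hVn : ∀ n : ℕ, 1 ≤ n → n ≤ N - 1 → ∀ x : ℝ, 0 ≤ x →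
      V n x = max (c n * x) (∫ y, V (n + 1) (max x y) ∂μ))
    (t : ℕ → ℝ)
    (ht : ∀ n : ℕ, 1 ≤ n → n ≤ N - 1 →
      (0 < t n ∧ c n * t n = ∫ y, V (n + 1) (max (t n) y) ∂μ) ∧
      (∀ s : ℝ, 0 < s → c n * s = (∫ y, V (n + 1) (max s y) ∂μ) → s = t n))
    (h : ℝ → ℝ) (hh : ∀ x : ℝ, h x = ∫ y, max x y ∂μ) :
    ∀ n : ℕ, 1 ≤ n → n ≤ N - 2 → t (n + 1) ≤ t n →
      c n * t n = c (n + 1) * h (t n) :=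
  threshold_scalar_equation_of_ge_next_general N τ hτ μ hmean c hc V hVN hVn t ht h hh
end

section
/- Let Φ : [0,∞) → ℝ be nonincreasing with 0 ≤ Φ(x) ≤ 1 for all x ≥ 0, and suppose there exist constants A_M > 0, B_M > 0 with Φ(x) ≤ A_M·exp(−B_M·x) for all x ≥ 0. Let q₁, q₂ > 0, r ∈ (0,1), c > 0, γ > 0, let a > 0 (the source–relay gain), b > 0 (the relay–destination gain), w ≥ 0 (the source–destination gain), and set ω := 2·q₁·q₂·a·b/(q₁·b + q₂·a). Then the conditional error probability satisfies (1 − Φ(r·a·c·γ))·Φ((r·w + (1−r)·b)·c·γ) + Φ(r·a·c·γ)·Φ(r·w·c·γ) ≤ A_M·exp(−B_M·((1−r)/(2q₁))·ω·c·γ) + A_M·exp(−B_M·(r/(2q₂))·ω·c·γ). -/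
/-- Exponential upper bound on the conditional error probability of the
decode-and-forward scheme in terms of the relay index `ω`. -/
theorem conditional_error_probability_upper_bound
    (Φ : ℝ → ℝ) (hΦanti : AntitoneOn Φ (Set.Ici 0))
    (hΦ01 : ∀ x : ℝ, 0 ≤ x → 0 ≤ Φ x ∧ Φ x ≤ 1)
    (A B : ℝ) (hA : 0 < A) (hB : 0 < B)
    (hΦexp : ∀ x : ℝ, 0 ≤ x → Φ x ≤ A * Real.exp (-B * x))
    (q₁ q₂ r c γ a b w : ℝ)
    (hq₁ : 0 < q₁) (hq₂ : 0 < q₂) (hr0 : 0 < r) (hr1 : r < 1)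
    (hc : 0 < c) (hγ : 0 < γ) (ha : 0 < a) (hb : 0 < b) (hw : 0 ≤ w) :
    ∀ ω : ℝ, ω = 2 * q₁ * q₂ * a * b / (q₁ * b + q₂ * a) →
      (1 - Φ (r * a * c * γ)) * Φ ((r * w + (1 - r) * b) * c * γ) +
        Φ (r * a * c * γ) * Φ (r * w * c * γ) ≤
      A * Real.exp (-B * ((1 - r) / (2 * q₁)) * ω * c * γ) +
        A * Real.exp (-B * (r / (2 * q₂)) * ω * c * γ) := by
  intro ω hω
  have hD : 0 < q₁ * b + q₂ * a := by positivity
  have hr1' : 0 < 1 - r := by linarith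
  -- key inequalities on the exponents
  have h1 : ((1 - r) / (2 * q₁)) * ω ≤ (1 - r) * b := by
    rw [hω, div_mul_div_comm, div_le_iff₀ (by positivity)]
    nlinarith [mul_pos hr1' (mul_pos (mul_pos hq₁ hq₁) (mul_pos hb hb))]
  have h2 : (r / (2 * q₂)) * ω ≤ r * a := by
    rw [hω, div_mul_div_comm, div_le_iff₀ (by positivity)]
    nlinarith [mul_pos hr0 (mul_pos (mul_pos hq₂ hq₂) (mul_pos ha ha))]
  have hγ1 : (0:ℝ) ≤ r * a * c * γ := by positivity
  have hx : (0:ℝ) ≤ (r * w + (1 - r) * b) * c * γ := by positivity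
  have hy : (0:ℝ) ≤ (1 - r) * b * c * γ := by positivity
  have hrw : (0:ℝ) ≤ r * w * c * γ := by positivity
  obtain ⟨hΦ1a, hΦ1b⟩ := hΦ01 _ hγ1
  obtain ⟨hΦxa, _⟩ := hΦ01 _ hx
  obtain ⟨_, hΦrwb⟩ := hΦ01 _ hrw
  -- first term
  have t1 : (1 - Φ (r * a * c * γ)) * Φ ((r * w + (1 - r) * b) * c * γ) ≤
      A * Real.exp (-B * ((1 - r) / (2 * q₁)) * ω * c * γ) := by
    have step1 : (1 - Φ (r * a * c * γ)) * Φ ((r * w + (1 - r) * b) * c * γ) ≤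
        Φ ((r * w + (1 - r) * b) * c * γ) := by
      nlinarith
    have step2 : Φ ((r * w + (1 - r) * b) * c * γ) ≤ Φ ((1 - r) * b * c * γ) := by
      apply hΦanti hy hx
      nlinarith
    have step3 : Φ ((1 - r) * b * c * γ) ≤ A * Real.exp (-B * ((1 - r) * b * c * γ)) :=
      hΦexp _ hy
    have step4 : A * Real.exp (-B * ((1 - r) * b * c * γ)) ≤
        A * Real.exp (-B * ((1 - r) / (2 * q₁)) * ω * c * γ) := by
      apply mul_le_mul_of_nonneg_left _ hA.le
      apply Real.exp_le_exp.mpr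
      have h := mul_le_mul_of_nonneg_left
        (mul_le_mul_of_nonneg_right h1 (by positivity : (0:ℝ) ≤ c * γ)) hB.le
      ring_nf at h ⊢
      linarith
    linarith
  -- second term
  have t2 : Φ (r * a * c * γ) * Φ (r * w * c * γ) ≤
      A * Real.exp (-B * (r / (2 * q₂)) * ω * c * γ) := by
    have step1 : Φ (r * a * c * γ) * Φ (r * w * c * γ) ≤ Φ (r * a * c * γ) := by
      nlinarith
    have step3 : Φ (r * a * c * γ) ≤ A * Real.exp (-B * (r * a * c * γ)) :=
      hΦexp _ hγ1
    have step4 : A * Real.exp (-B * (r * a * c * γ)) ≤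
        A * Real.exp (-B * (r / (2 * q₂)) * ω * c * γ) := by
      apply mul_le_mul_of_nonneg_left _ hA.le
      apply Real.exp_le_exp.mpr
      have h := mul_le_mul_of_nonneg_left
        (mul_le_mul_of_nonneg_right h2 (by positivity : (0:ℝ) ≤ c * γ)) hB.le
      ring_nf at h ⊢
      linarith
    linarith
  linarith
end
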